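/- Let R be a commutative Noetherian ring of prime characteristic p whose Frobenius endomorphism is finite and flat, and let a ⊆ b be ideals of R such that there exists a nonnegative integer m with b^{m+ℓ} ⊆ a^ℓ for every nonnegative integer ℓ (these hypotheses hold in particular when b is the integral closure of a). Then τ(a^c) = τ(b^c) for every real number c ≥ 0. -/

import Mathlib

/-!
Over a Noetherian ring a finite flat module is projective, so `R` is projective over itself via
`F^e`. Then `K^{[1/q]}` is the ideal generated by the coordinates of the elements of `K` under a
splitting of a free presentation; this gives `K ⊆ (K^{[1/q]})^{[q]}` and the projection formula
`I · K^{[1/q]} ⊆ (I^{[q]} K)^{[1/q]}`.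

The increasing chain `(b^m)^{[1/p^k]}` stabilizes at some `J = (b^m)^{[1/p^k]}`, so
`J ⊆ (J^{[1/p]})^{[p]} = J^{[p]} ⊆ J²`. A finitely generated idempotent ideal acts as the
identity on the ideals it contains, hence for `M ≥ m` and `M' ≤ M p^k`
`b^M = J b^M ⊆ ((b^M)^{[p^k]} b^m)^{[1/p^k]} ⊆ (b^{m + M'})^{[1/p^k]} ⊆ (a^{M'})^{[1/p^k]}`.
With `M = ⌈c p^e⌉ ≥ m` and `M' = ⌈c p^{e+k}⌉` this puts each term of `τ(b^c)` inside a term of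
`τ(a^c)`; the other inclusion is monotonicity.
-/

open Ideal

/-- The `q`-th bracket power `J^{[q]}` of an ideal: the ideal generated by
the `q`-th powers of the elements of `J`. -/
def bracketPow {R : Type*} [CommRing R] (J : Ideal R) (q : ℕ) : Ideal R :=
  Ideal.span ((fun x => x ^ q) '' (J : Set R))

/-- The ideal `b^{[1/q]}`: the smallest ideal `J` with `b ⊆ J^{[q]}`
(realized as the intersection of all such ideals). -/
def frobRoot {R : Type*} [CommRing R] (b : Ideal R) (q : ℕ) : Ideal R :=
  sInf {J : Ideal R | b ≤ bracketPow J q}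

/-- The generalized test ideal `τ(a^c) = ⋃_{e ≥ 1} (a^{⌈c p^e⌉})^{[1/p^e]}`. -/
noncomputable def testIdeal {R : Type*} [CommRing R] (p : ℕ) (a : Ideal R) (c : ℝ) : Ideal R :=
  ⨆ e : ℕ, frobRoot (a ^ ⌈c * (p : ℝ) ^ (e + 1)⌉₊) (p ^ (e + 1))

/-- `ν_a^J(q)`: the largest nonnegative integer `r` with `a^r ⊄ J^{[q]}`
(and `0` if there is no such `r`). -/
noncomputable def nuF {R : Type*} [CommRing R] (a J : Ideal R) (q : ℕ) : ℕ :=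
  sSup {r : ℕ | ¬ a ^ r ≤ bracketPow J q}

/-- The F-threshold `c^J(a) = sup_{e ≥ 1} ν_a^J(p^e)/p^e`. -/
noncomputable def FThreshold {R : Type*} [CommRing R] (p : ℕ) (a J : Ideal R) : ℝ :=
  ⨆ e : ℕ, (nuF a J (p ^ (e + 1)) : ℝ) / (p : ℝ) ^ (e + 1)

/-- `α > 0` is an F-jumping exponent of `a` if `τ(a^α) ≠ τ(a^c)` for all `0 ≤ c < α`. -/
def IsFJumpingExponent {R : Type*} [CommRing R] (p : ℕ) (a : Ideal R) (α : ℝ) : Prop :=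
  0 < α ∧ ∀ c : ℝ, 0 ≤ c → c < α → testIdeal p a c ≠ testIdeal p a α

namespace Submodule

variable {R M : Type*} [CommRing R] [AddCommGroup M] [Module R M]

def contentIdeal (N : Submodule R M) : Ideal R :=
  sInf {J : Ideal R | N ≤ J • ⊤}

theorem apply_mem_of_mem_smul_top {J : Ideal R} {x : M} (hx : x ∈ J • (⊤ : Submodule R M))
    (g : M →ₗ[R] R) : g x ∈ J := by
  have hgx : g x ∈ (J • (⊤ : Submodule R M)).map g := mem_map_of_mem hx
  rw [map_smul''] at hgx
  simpa using (smul_mono_right J le_top : J • _ ≤ J • (⊤ : Ideal R)) hgx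

def coordIdeal (s : M →ₗ[R] M →₀ R) (N : Submodule R M) : Ideal R :=
  Ideal.span {c | ∃ x ∈ N, ∃ y, s x y = c}

theorem coordIdeal_le {s : M →ₗ[R] M →₀ R} {N : Submodule R M} {J : Ideal R}
    (h : N ≤ J • ⊤) : coordIdeal s N ≤ J := by
  rw [coordIdeal, Ideal.span_le]
  rintro _ ⟨x, hx, y, rfl⟩
  exact apply_mem_of_mem_smul_top (h hx) (Finsupp.lapply y ∘ₗ s)

theorem le_coordIdeal_smul_top {s : M →ₗ[R] M →₀ R}
    (hs : Function.LeftInverse (Finsupp.linearCombination R id) s) (N : Submodule R M) :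
    N ≤ coordIdeal s N • ⊤ := by
  intro x hx
  rw [← hs x, Finsupp.linearCombination_apply]
  exact sum_mem fun y _ => smul_mem_smul (subset_span ⟨x, hx, y, rfl⟩) mem_top

theorem mul_coordIdeal_le {s : M →ₗ[R] M →₀ R} {I J : Ideal R} {N : Submodule R M}
    (h : I • N ≤ J • ⊤) : I * coordIdeal s N ≤ J := by
  have hcolon : coordIdeal s N ≤ J.colon (I : Set R) := by
    rw [coordIdeal, span_le]
    rintro _ ⟨x, hx, y, rfl⟩
    refine mem_colon.mpr fun i hi => ?_
    rw [smul_eq_mul, mul_comm, ← smul_eq_mul, ← Finsupp.smul_apply, ← map_smul]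
    exact apply_mem_of_mem_smul_top (h (smul_mem_smul hi hx)) (Finsupp.lapply y ∘ₗ s)
  rw [mul_comm, Ideal.mul_le]
  exact fun d hd i hi => mem_colon.mp (hcolon hd) i hi

variable [Module.Projective R M]

theorem le_contentIdeal_smul_top (N : Submodule R M) : N ≤ N.contentIdeal • ⊤ := by
  obtain ⟨s, hs⟩ := Module.projective_def.mp ‹_›
  exact (le_coordIdeal_smul_top hs N).trans
    (smul_mono_left (le_sInf fun _ => coordIdeal_le))

theorem mul_contentIdeal_le {I J : Ideal R} {N : Submodule R M} (h : I • N ≤ J • ⊤) :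
    I * N.contentIdeal ≤ J := by
  obtain ⟨s, hs⟩ := Module.projective_def.mp ‹_›
  exact (mul_mono_right (sInf_le (le_coordIdeal_smul_top hs N))).trans (mul_coordIdeal_le h)

end Submodule

theorem Ideal.le_mul_of_le_mul_self {R : Type*} [CommRing R] {J L : Ideal R} (hJ : J.FG)
    (hJJ : J ≤ J * J) (hL : L ≤ J) : L ≤ J * L := by
  obtain ⟨r, hr, hrx⟩ :=
    Submodule.exists_mem_and_smul_eq_self_of_fg_of_le_smul J J hJ (by rwa [smul_eq_mul])
  intro x hx
  rw [← hrx x (hL hx)]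
  exact mul_mem_mul hr hx

namespace RingHom

variable {R : Type*} [CommRing R]

theorem Finite.pow {f : R →+* R} (hf : f.Finite) : ∀ n : ℕ, (f ^ n).Finite
  | 0 => Finite.id R
  | n + 1 => by
    rw [pow_succ]
    exact (hf.pow n).comp hf

theorem Flat.pow {f : R →+* R} (hf : f.Flat) : ∀ n : ℕ, (f ^ n).Flat
  | 0 => Flat.id R
  | n + 1 => by
    rw [pow_succ]
    exact hf.comp (hf.pow n)

variable {S : Type*} [CommRing S] {f : R →+* S}

theorem Finite.projective_of_flat [IsNoetherianRing R] (hfin : f.Finite) (hflat : f.Flat) :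
    letI := f.toAlgebra; Module.Projective R S := by
  algebraize [f]
  have := Module.finitePresentation_of_finite R S
  exact Module.Flat.projective_of_finitePresentation

theorem sInf_setOf_le_map_eq_contentIdeal (K : Ideal S) :
    letI := f.toAlgebra
    sInf {J : Ideal R | K ≤ J.map f} = (K.restrictScalars R).contentIdeal := by
  algebraize [f]
  simp only [Submodule.contentIdeal, Ideal.smul_top_eq_map]
  rfl

theorem Finite.le_map_sInf [IsNoetherianRing R] (hfin : f.Finite) (hflat : f.Flat)
    (K : Ideal S) : K ≤ (sInf {J : Ideal R | K ≤ J.map f}).map f := by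
  have := hfin.projective_of_flat hflat
  algebraize [f]
  rw [sInf_setOf_le_map_eq_contentIdeal]
  have hK := (K.restrictScalars R).le_contentIdeal_smul_top
  rwa [Ideal.smul_top_eq_map, Submodule.restrictScalars_le] at hK

theorem Finite.mul_sInf_le [IsNoetherianRing R] (hfin : f.Finite) (hflat : f.Flat)
    {I J : Ideal R} {K : Ideal S} (h : I.map f * K ≤ J.map f) :
    I * sInf {J' : Ideal R | K ≤ J'.map f} ≤ J := by
  have := hfin.projective_of_flat hflat
  algebraize [f]
  rw [sInf_setOf_le_map_eq_contentIdeal]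
  refine Submodule.mul_contentIdeal_le ?_
  rw [Ideal.smul_top_eq_map, ← Ideal.smul_restrictScalars, Submodule.restrictScalars_le]
  exact h

end RingHom

theorem ceil_mul_pow_add_le (c : ℝ) (p n k : ℕ) :
    ⌈c * (p : ℝ) ^ (n + k)⌉₊ ≤ ⌈c * (p : ℝ) ^ n⌉₊ * p ^ k := by
  rw [Nat.ceil_le, pow_add, ← mul_assoc]
  push_cast
  exact mul_le_mul_of_nonneg_right (Nat.le_ceil _) (by positivity)

open Filter in
theorem exists_le_ceil_mul_pow {c : ℝ} (hc : 0 < c) {p : ℕ} (hp : 1 < p) (m e : ℕ) :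
    ∃ n, e ≤ n ∧ m ≤ ⌈c * (p : ℝ) ^ (n + 1)⌉₊ := by
  have hp' : (1 : ℝ) < p := by exact_mod_cast hp
  have hlim : Tendsto (fun n : ℕ => c * (p : ℝ) ^ (n + 1)) atTop atTop :=
    ((tendsto_pow_atTop_atTop_of_one_lt hp').comp (tendsto_add_atTop_nat 1)).const_mul_atTop hc
  obtain ⟨n, hen, hmn⟩ :=
    ((eventually_ge_atTop e).and (hlim.eventually_ge_atTop (m : ℝ))).exists
  exact ⟨n, hen, Nat.cast_le.mp (hmn.trans (Nat.le_ceil _))⟩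

section Frobenius

variable {R : Type*} [CommRing R]

theorem bracketPow_mono {q : ℕ} {J K : Ideal R} (h : J ≤ K) : bracketPow J q ≤ bracketPow K q :=
  Ideal.span_mono (Set.image_mono h)

theorem bracketPow_le_pow (J : Ideal R) (q : ℕ) : bracketPow J q ≤ J ^ q := by
  rw [bracketPow, Ideal.span_le]
  rintro _ ⟨x, hx, rfl⟩
  exact Ideal.pow_mem_pow hx q

theorem frobRoot_mono {q : ℕ} {K L : Ideal R} (h : K ≤ L) : frobRoot K q ≤ frobRoot L q :=
  sInf_le_sInf fun _ hJ => h.trans hJ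

theorem le_frobRoot_self {q : ℕ} (hq : q ≠ 0) (K : Ideal R) : K ≤ frobRoot K q :=
  le_sInf fun _ hJ => hJ.trans ((bracketPow_le_pow _ q).trans (Ideal.pow_le_self hq))

theorem testIdeal_mono (p : ℕ) {a b : Ideal R} (hab : a ≤ b) (c : ℝ) :
    testIdeal p a c ≤ testIdeal p b c :=
  iSup_mono fun _ => frobRoot_mono (Ideal.pow_right_mono hab _)

variable {p : ℕ} [ExpChar R p]

theorem bracketPow_eq_map (J : Ideal R) (n : ℕ) :
    bracketPow J (p ^ n) = J.map (iterateFrobenius R p n) :=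
  rfl

theorem bracketPow_bracketPow (J : Ideal R) (a b : ℕ) :
    bracketPow (bracketPow J (p ^ a)) (p ^ b) = bracketPow J (p ^ (a + b)) := by
  rw [bracketPow_eq_map, bracketPow_eq_map, bracketPow_eq_map, Ideal.map_map,
    ← iterateFrobenius_add, add_comm]

theorem frobRoot_eq_sInf_map (K : Ideal R) (n : ℕ) :
    frobRoot K (p ^ n) = sInf {J : Ideal R | K ≤ J.map (iterateFrobenius R p n)} :=
  rfl

theorem iterateFrobenius_finite (hfin : (frobenius R p).Finite) (n : ℕ) :
    (iterateFrobenius R p n).Finite :=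
  iterateFrobenius_eq_pow R p n ▸ hfin.pow n

theorem iterateFrobenius_flat (hflat : (frobenius R p).Flat) (n : ℕ) :
    (iterateFrobenius R p n).Flat :=
  iterateFrobenius_eq_pow R p n ▸ hflat.pow n

variable [IsNoetherianRing R]

theorem le_bracketPow_frobRoot (hfin : (frobenius R p).Finite) (hflat : (frobenius R p).Flat)
    (n : ℕ) (K : Ideal R) : K ≤ bracketPow (frobRoot K (p ^ n)) (p ^ n) := by
  rw [frobRoot_eq_sInf_map, bracketPow_eq_map]
  exact (iterateFrobenius_finite hfin n).le_map_sInf (iterateFrobenius_flat hflat n) K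

theorem mul_frobRoot_le_frobRoot (hfin : (frobenius R p).Finite)
    (hflat : (frobenius R p).Flat) (n : ℕ) (I K : Ideal R) :
    I * frobRoot K (p ^ n) ≤ frobRoot (bracketPow I (p ^ n) * K) (p ^ n) := by
  rw [frobRoot_eq_sInf_map K]
  refine (iterateFrobenius_finite hfin n).mul_sInf_le (iterateFrobenius_flat hflat n) ?_
  rw [← bracketPow_eq_map, ← bracketPow_eq_map]
  exact le_bracketPow_frobRoot hfin hflat n _

theorem frobRoot_pow_add (hfin : (frobenius R p).Finite) (hflat : (frobenius R p).Flat)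
    (a b : ℕ) (K : Ideal R) :
    frobRoot K (p ^ (a + b)) = frobRoot (frobRoot K (p ^ b)) (p ^ a) := by
  refine le_antisymm (sInf_le ?_) (le_sInf fun J hJ => sInf_le ?_)
  · show K ≤ bracketPow _ (p ^ (a + b))
    rw [← bracketPow_bracketPow]
    exact (le_bracketPow_frobRoot hfin hflat b K).trans
      (bracketPow_mono (le_bracketPow_frobRoot hfin hflat a _))
  · show frobRoot K (p ^ b) ≤ bracketPow J (p ^ a)
    refine sInf_le (show K ≤ bracketPow (bracketPow J (p ^ a)) (p ^ b) from ?_)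
    rwa [bracketPow_bracketPow]

theorem le_frobRoot_bracketPow (hfin : (frobenius R p).Finite) (hflat : (frobenius R p).Flat)
    (n : ℕ) (I : Ideal R) : I ≤ frobRoot (bracketPow I (p ^ n)) (p ^ n) := by
  have hI := mul_frobRoot_le_frobRoot hfin hflat n I ⊤
  rwa [mul_top, top_le_iff.mp (le_frobRoot_self (expChar_pow_pos R p n).ne' ⊤), mul_top] at hI

theorem frobRoot_le_frobRoot_pow_add (hfin : (frobenius R p).Finite)
    (hflat : (frobenius R p).Flat) {K L : Ideal R} {k : ℕ} (h : K ≤ frobRoot L (p ^ k)) (n : ℕ) :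
    frobRoot K (p ^ n) ≤ frobRoot L (p ^ (n + k)) :=
  (frobRoot_mono h).trans (frobRoot_pow_add hfin hflat n k L).ge

theorem pow_le_frobRoot_pow (hfin : (frobenius R p).Finite) (hflat : (frobenius R p).Flat)
    (b : Ideal R) {M M' k : ℕ} (h : M' ≤ M * p ^ k) : b ^ M ≤ frobRoot (b ^ M') (p ^ k) :=
  (le_frobRoot_bracketPow hfin hflat k _).trans <| frobRoot_mono <|
    (bracketPow_le_pow _ _).trans (by rw [← pow_mul]; exact Ideal.pow_le_pow_right h)

theorem frobRoot_pow_ceil_mono (hfin : (frobenius R p).Finite) (hflat : (frobenius R p).Flat)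
    (a : Ideal R) (c : ℝ) {n n' : ℕ} (h : n ≤ n') :
    frobRoot (a ^ ⌈c * (p : ℝ) ^ n⌉₊) (p ^ n) ≤ frobRoot (a ^ ⌈c * (p : ℝ) ^ n'⌉₊) (p ^ n') := by
  obtain ⟨k, rfl⟩ := Nat.exists_eq_add_of_le h
  exact frobRoot_le_frobRoot_pow_add hfin hflat
    (pow_le_frobRoot_pow hfin hflat a (ceil_mul_pow_add_le c p n k)) n

theorem exists_frobRoot_le_mul_self [Fact p.Prime] (hfin : (frobenius R p).Finite)
    (hflat : (frobenius R p).Flat) (K : Ideal R) :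
    ∃ k, frobRoot K (p ^ k) ≤ frobRoot K (p ^ k) * frobRoot K (p ^ k) := by
  have hmono : Monotone fun k => frobRoot K (p ^ k) := monotone_nat_of_le_succ fun k =>
    frobRoot_le_frobRoot_pow_add hfin hflat (le_frobRoot_self (expChar_pow_pos R p 1).ne' K) k
  obtain ⟨k, hk⟩ := monotone_stabilizes_iff_noetherian.mpr inferInstance ⟨_, hmono⟩
  refine ⟨k, ?_⟩
  set J := frobRoot K (p ^ k)
  have hfix : frobRoot J (p ^ 1) = J := by
    rw [← frobRoot_pow_add hfin hflat, add_comm]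
    exact (hk (k + 1) k.le_succ).symm
  calc J ≤ bracketPow (frobRoot J (p ^ 1)) (p ^ 1) := le_bracketPow_frobRoot hfin hflat 1 J
    _ = bracketPow J (p ^ 1) := by rw [hfix]
    _ ≤ J ^ p ^ 1 := bracketPow_le_pow J _
    _ ≤ J ^ 2 := Ideal.pow_le_pow_right (by simpa using (Fact.out : p.Prime).two_le)
    _ = J * J := sq J

theorem exists_pow_le_frobRoot [Fact p.Prime] (hfin : (frobenius R p).Finite)
    (hflat : (frobenius R p).Flat) {a b : Ideal R} {m : ℕ} (hm : ∀ ℓ, b ^ (m + ℓ) ≤ a ^ ℓ) :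
    ∃ k, ∀ M M', m ≤ M → M' ≤ M * p ^ k → b ^ M ≤ frobRoot (a ^ M') (p ^ k) := by
  obtain ⟨k, hk⟩ := exists_frobRoot_le_mul_self hfin hflat (b ^ m)
  refine ⟨k, fun M M' hmM hM' => ?_⟩
  set J := frobRoot (b ^ m) (p ^ k)
  have hbJ : b ^ M ≤ J :=
    (Ideal.pow_le_pow_right hmM).trans (le_frobRoot_self (expChar_pow_pos R p k).ne' _)
  have hpow : bracketPow (b ^ M) (p ^ k) * b ^ m ≤ a ^ M' :=
    calc bracketPow (b ^ M) (p ^ k) * b ^ m ≤ (b ^ M) ^ p ^ k * b ^ m :=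
          mul_mono_left (bracketPow_le_pow _ _)
      _ = b ^ (M * p ^ k + m) := by rw [← pow_mul, ← pow_add]
      _ ≤ b ^ (m + M') := Ideal.pow_le_pow_right (by omega)
      _ ≤ a ^ M' := hm M'
  calc b ^ M ≤ J * b ^ M := Ideal.le_mul_of_le_mul_self (IsNoetherian.noetherian J) hk hbJ
    _ = b ^ M * J := mul_comm _ _
    _ ≤ frobRoot (bracketPow (b ^ M) (p ^ k) * b ^ m) (p ^ k) :=
      mul_frobRoot_le_frobRoot hfin hflat k _ _
    _ ≤ frobRoot (a ^ M') (p ^ k) := frobRoot_mono hpow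

end Frobenius

theorem stmt11_testIdeal_integral_closure_general
    {R : Type*} [CommRing R] [IsNoetherianRing R] (p : ℕ) [Fact p.Prime] [CharP R p]
    (hfin : (frobenius R p).Finite) (hflat : (frobenius R p).Flat)
    (a b : Ideal R) (hab : a ≤ b) (m : ℕ) (hm : ∀ ℓ : ℕ, b ^ (m + ℓ) ≤ a ^ ℓ)
    (c : ℝ) :
    testIdeal p a c = testIdeal p b c := by
  rcases le_or_gt c 0 with hc | hc
  · have hceil (e : ℕ) : ⌈c * (p : ℝ) ^ (e + 1)⌉₊ = 0 :=
      Nat.ceil_eq_zero.mpr (mul_nonpos_of_nonpos_of_nonneg hc (by positivity))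
    simp only [testIdeal, hceil, pow_zero]
  obtain ⟨k, hk⟩ := exists_pow_le_frobRoot hfin hflat hm
  refine le_antisymm (testIdeal_mono p hab c) (iSup_le fun e => ?_)
  obtain ⟨n, hen, hmn⟩ := exists_le_ceil_mul_pow hc (Fact.out : p.Prime).one_lt m e
  calc frobRoot (b ^ ⌈c * (p : ℝ) ^ (e + 1)⌉₊) (p ^ (e + 1))
      ≤ frobRoot (b ^ ⌈c * (p : ℝ) ^ (n + 1)⌉₊) (p ^ (n + 1)) :=
        frobRoot_pow_ceil_mono hfin hflat b c (by omega)
    _ ≤ frobRoot (a ^ ⌈c * (p : ℝ) ^ (n + 1 + k)⌉₊) (p ^ (n + 1 + k)) :=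
        frobRoot_le_frobRoot_pow_add hfin hflat
          (hk _ _ hmn (ceil_mul_pow_add_le c p (n + 1) k)) _
    _ ≤ testIdeal p a c := by
        rw [add_right_comm]
        exact le_iSup (fun e => frobRoot (a ^ ⌈c * (p : ℝ) ^ (e + 1)⌉₊) (p ^ (e + 1))) (n + k)

/-- ideals with the same integral closure have the same test ideals. -/
theorem stmt11_testIdeal_integral_closure
    {R : Type*} [CommRing R] [IsNoetherianRing R] (p : ℕ) [Fact p.Prime] [CharP R p]
    (hfin : (frobenius R p).Finite) (hflat : (frobenius R p).Flat)
    (a b : Ideal R) (hab : a ≤ b) (m : ℕ) (hm : ∀ ℓ : ℕ, b ^ (m + ℓ) ≤ a ^ ℓ)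
    (c : ℝ) (hc : 0 ≤ c) :
    testIdeal p a c = testIdeal p b c :=
  stmt11_testIdeal_integral_closure_general p hfin hflat a b hab m hm c
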